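/- Under the hypotheses of the global-node lemma (v adjacent to all nodes including itself, no other self-loops), the global node v strictly maximizes the subgraph centrality: ∑_{k≥0} (A^k)_{vv}/k! > ∑_{k≥0} (A^k)_{uu}/k! for every vertex u ≠ v. -/

import Mathlib

/-!
Both series converge, being entries of the exponential series of `A`, so it suffices to compare
them termwise. Row and column `v` of `A` consist of ones, hence
`(A ^ (m + 2)) v v = ∑ a, ∑ b, (A ^ m) a b`, which dominates every entry
`∑ a, ∑ b, A i a * (A ^ m) a b * A b j` of `A ^ (m + 2)` because the entries of `A` lie in
`[0, 1]`. At `k = 1` the comparison is strict: `A u u = 0 < 1 = A v v`.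
-/

open Finset

namespace Matrix

variable {n R : Type*} [Fintype n] [DecidableEq n]

theorem pow_add_two_apply [CommSemiring R] (A : Matrix n n R) (m : ℕ) (i j : n) :
    (A ^ (m + 2)) i j = ∑ a, ∑ b, A i a * (A ^ m) a b * A b j := by
  rw [pow_succ, pow_succ', mul_apply]
  simp_rw [mul_apply, sum_mul]
  exact sum_comm

theorem pow_apply_le_pow_apply_of_row_col_eq_one [CommSemiring R] [PartialOrder R]
    [IsOrderedRing R] {A : Matrix n n R} (h0 : ∀ i j, 0 ≤ A i j) (h1 : ∀ i j, A i j ≤ 1)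
    {v : n} (hrow : ∀ j, A v j = 1) (hcol : ∀ i, A i v = 1) :
    ∀ (k : ℕ) (i j : n), (A ^ k) i j ≤ (A ^ k) v v
  | 0, i, j => by
    rw [pow_zero, one_apply_eq, one_apply]
    split_ifs <;> simp
  | 1, i, j => by simpa only [pow_one, hrow] using h1 i j
  | m + 2, i, j => by
    rw [pow_add_two_apply, pow_add_two_apply]
    refine sum_le_sum fun a _ => sum_le_sum fun b _ => ?_
    have hAm := pow_apply_nonneg h0 m a b
    calc A i a * (A ^ m) a b * A b j ≤ A i a * (A ^ m) a b :=
          mul_le_of_le_one_right (mul_nonneg (h0 i a) hAm) (h1 b j)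
      _ ≤ (A ^ m) a b := mul_le_of_le_one_left hAm (h1 i a)
      _ = A v a * (A ^ m) a b * A b v := by rw [hrow, hcol, one_mul, mul_one]

theorem summable_pow_apply_div_factorial (A : Matrix n n ℝ) (i j : n) :
    Summable fun k => (A ^ k) i j / k.factorial := by
  -- Any Banach-algebra norm will do; this one induces the product topology on matrices.
  let _ := Matrix.linftyOpNormedRing (n := n) (α := ℝ)
  let _ := Matrix.linftyOpNormedAlgebra (n := n) (R := ℝ) (α := ℝ)
  have hexp := NormedSpace.expSeries_summable' (𝕂 := ℝ) A
  simpa [div_eq_inv_mul] using Pi.summable.1 (Pi.summable.1 hexp i) j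

end Matrix

/-- Under the global-node hypotheses, the global node `v` strictly maximizes the subgraph
centrality `∑_{k≥0} (A^k)_{ii}/k!`. -/
theorem global_node_max_subgraph_centrality {V : Type*} [Fintype V] [DecidableEq V]
    (A : Matrix V V ℝ) (hsymm : A.IsSymm)
    (h01 : ∀ i j, A i j = 0 ∨ A i j = 1)
    (v : V) (hrow : ∀ u, A v u = 1)
    (hdiag : ∀ u, u ≠ v → A u u = 0)
    (u : V) (hu : u ≠ v) :
    ∑' k : ℕ, (A ^ k) u u / (Nat.factorial k : ℝ) < ∑' k : ℕ, (A ^ k) v v / (Nat.factorial k : ℝ) := by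
  have hcol : ∀ w, A w v = 1 := fun w => by rw [← hsymm.apply w v, hrow]
  have hunit : ∀ i j, 0 ≤ A i j ∧ A i j ≤ 1 := fun i j => by
    rcases h01 i j with h | h <;> simp [h]
  have hdom := Matrix.pow_apply_le_pow_apply_of_row_col_eq_one
    (fun i j => (hunit i j).1) (fun i j => (hunit i j).2) hrow hcol
  refine Summable.tsum_lt_tsum (i := 1) (fun k => by gcongr; exact hdom k u u) ?_
    (Matrix.summable_pow_apply_div_factorial A u u)
    (Matrix.summable_pow_apply_div_factorial A v v)
  simp [hdiag u hu, hrow v]
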